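/- Let R be a commutative ring with involution * in which 2 is invertible, q ∈ M_n(R) idempotent with Tr(q)=1 and vanishing 2×2 minors, and r ∈ R self-adjoint with r² Tr(q†q) = 1. Define I(a) := r[a†, q] + (r³ Tr(a†q)/2)[q, q†] for tangent vectors a (qa + aq = a). Then I(a) is tangent at q and I(I(a)) = −a. -/
import Mathlib

open Matrix

/-- The normalized operator `I(a) = r[a†,q] + (r³ Tr(a†q)/2)[q,q†]`. -/
def IMat {R : Type*} [CommRing R] [StarRing R] [Invertible (2 : R)] {n : ℕ}
    (q : Matrix (Fin n) (Fin n) R) (r : R) (a : Matrix (Fin n) (Fin n) R) :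
    Matrix (Fin n) (Fin n) R :=
  r • (aᴴ * q - q * aᴴ) + (⅟(2 : R) * (r ^ 3 * (aᴴ * q).trace)) • (q * qᴴ - qᴴ * q)

private lemma minor_key {R : Type*} [CommRing R] {n : ℕ}
    {q : Matrix (Fin n) (Fin n) R}
    (hminor : ∀ i j k l, q i k * q j l = q i l * q j k)
    (x : Matrix (Fin n) (Fin n) R) :
    q * x * q = (x * q).trace • q := by
  ext i l
  simp only [Matrix.mul_apply, Matrix.smul_apply, Matrix.trace, Matrix.diag_apply, smul_eq_mul,
    Finset.sum_mul]
  rw [Finset.sum_comm]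
  refine Finset.sum_congr rfl fun j _ => Finset.sum_congr rfl fun k _ => ?_
  linear_combination x j k * hminor i k j l

/-- for `(q, r)` on the cover and `a` tangent at `q`, `I(a)` is
tangent at `q` and `I(I(a)) = −a`. -/
theorem stmt_19 {R : Type*} [CommRing R] [StarRing R] [Invertible (2 : R)]
    {n : ℕ} (q a : Matrix (Fin n) (Fin n) R)
    (hq : q * q = q) (htr : q.trace = 1)
    (hminor : ∀ i j k l, q i k * q j l = q i l * q j k)
    (r : R) (hrsa : star r = r) (hr : r ^ 2 * (qᴴ * q).trace = 1)
    (ha : q * a + a * q = a) :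
    q * IMat q r a + IMat q r a * q = IMat q r a ∧
      IMat q r (IMat q r a) = -a := by
  have hstar2 : star (⅟(2:R)) = ⅟2 := by
    have h2 : (2:R) * star (⅟(2:R)) = 1 := by
      have := congrArg star (invOf_mul_self (2:R))
      rwa [star_mul', star_ofNat, star_one, mul_comm] at this
    exact (invOf_eq_right_inv h2).symm
  have hqq : ∀ x : Matrix (Fin n) (Fin n) R, x * q * q = x * q := fun x => by
    rw [mul_assoc, hq]
  have hmq : ∀ x : Matrix (Fin n) (Fin n) R, q * x * q = (x * q).trace • q :=
    minor_key hminor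
  have hmP : ∀ x : Matrix (Fin n) (Fin n) R, qᴴ * x * qᴴ = (x * qᴴ).trace • qᴴ := by
    intro x
    have h := congrArg conjTranspose (hmq xᴴ)
    rw [conjTranspose_mul, conjTranspose_mul, conjTranspose_conjTranspose,
      conjTranspose_smul, ← Matrix.trace_conjTranspose, conjTranspose_mul,
      conjTranspose_conjTranspose, Matrix.trace_mul_comm, ← Matrix.mul_assoc] at h
    exact h
  have hqPq : q * qᴴ * q = (qᴴ * q).trace • q := hmq qᴴ
  have hPqP : qᴴ * q * qᴴ = (qᴴ * q).trace • qᴴ := by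
    have h := hmP q
    rwa [Matrix.trace_mul_comm] at h
  constructor
  · -- tangency
    show q * (r • (aᴴ * q - q * aᴴ) + (⅟(2 : R) * (r ^ 3 * (aᴴ * q).trace)) • (q * qᴴ - qᴴ * q))
        + (r • (aᴴ * q - q * aᴴ) + (⅟(2 : R) * (r ^ 3 * (aᴴ * q).trace)) • (q * qᴴ - qᴴ * q)) * q
        = r • (aᴴ * q - q * aᴴ) + (⅟(2 : R) * (r ^ 3 * (aᴴ * q).trace)) • (q * qᴴ - qᴴ * q)
    simp only [mul_add, add_mul, mul_sub, sub_mul, mul_smul_comm, smul_mul_assoc,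
      ← mul_assoc, hq, hqq]
    module
  · -- involution
    have hbH : (IMat q r a)ᴴ =
        r • (qᴴ * a - a * qᴴ) + (⅟(2:R) * (r ^ 3 * (qᴴ * a).trace)) • (q * qᴴ - qᴴ * q) := by
      show (r • (aᴴ * q - q * aᴴ) + (⅟(2 : R) * (r ^ 3 * (aᴴ * q).trace)) • (q * qᴴ - qᴴ * q))ᴴ = _
      rw [conjTranspose_add, conjTranspose_smul, conjTranspose_smul, conjTranspose_sub,
        conjTranspose_sub, conjTranspose_mul, conjTranspose_mul, conjTranspose_mul,
        conjTranspose_mul, conjTranspose_conjTranspose, conjTranspose_conjTranspose,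
        hrsa, star_mul', star_mul', hstar2, star_pow, hrsa,
        ← Matrix.trace_conjTranspose, conjTranspose_mul, conjTranspose_conjTranspose]
    have haq0 : q * a * q = 0 := by
      have h := congrArg (fun x => q * x * q) ha
      simp only [mul_add, add_mul, ← mul_assoc, hq, hqq] at h
      have h2 : q * a * q + q * a * q = q * a * q + 0 := by rw [add_zero]; exact h
      exact add_left_cancel h2
    have hsigma : (qᴴ * a).trace = (a * qᴴ * q).trace + (qᴴ * a * q).trace := by
      conv_lhs => rw [← ha]
      rw [mul_add, trace_add, ← mul_assoc qᴴ q a, Matrix.trace_mul_comm (qᴴ * q) a,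
        ← mul_assoc a qᴴ q, ← mul_assoc qᴴ a q]
    have H5 : a * qᴴ * q = (a * qᴴ * q).trace • q + (qᴴ * q).trace • (a * q) := by
      conv_lhs => rw [← ha]
      rw [add_mul, add_mul, mul_assoc q a qᴴ, hmq (a * qᴴ), mul_assoc a q qᴴ,
        mul_assoc a (q * qᴴ) q, hqPq, mul_smul_comm]
    have H6 : q * qᴴ * a = (qᴴ * q).trace • (q * a) + (qᴴ * a * q).trace • q := by
      conv_lhs => rw [← ha]
      rw [mul_add, ← mul_assoc (q * qᴴ) q a, hqPq, smul_mul_assoc,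
        mul_assoc q qᴴ (a * q), ← mul_assoc qᴴ a q, ← mul_assoc q (qᴴ * a) q, hmq (qᴴ * a)]
    have H7 : (qᴴ * q).trace • (qᴴ * a * q) = (qᴴ * a * q).trace • (qᴴ * q) := by
      calc (qᴴ * q).trace • (qᴴ * a * q) = qᴴ * q * qᴴ * a * q := by
            rw [hPqP, smul_mul_assoc, smul_mul_assoc]
        _ = qᴴ * (q * (qᴴ * a) * q) := by simp only [mul_assoc]
        _ = qᴴ * ((qᴴ * a * q).trace • q) := by rw [hmq (qᴴ * a)]
        _ = (qᴴ * a * q).trace • (qᴴ * q) := by rw [mul_smul_comm]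
    have H8 : (qᴴ * q).trace • (q * a * qᴴ) = (a * qᴴ * q).trace • (q * qᴴ) := by
      calc (qᴴ * q).trace • (q * a * qᴴ) = q * a * (qᴴ * q * qᴴ) := by
            rw [hPqP, mul_smul_comm]
        _ = q * (a * qᴴ) * q * qᴴ := by simp only [mul_assoc]
        _ = ((a * qᴴ * q).trace • q) * qᴴ := by rw [hmq (a * qᴴ)]
        _ = (a * qᴴ * q).trace • (q * qᴴ) := by rw [smul_mul_assoc]
    have htrb : ((IMat q r a)ᴴ * q).trace
        = r * ((qᴴ * a * q).trace - (a * qᴴ * q).trace) := by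
      rw [hbH]
      simp only [add_mul, smul_mul_assoc, sub_mul, hqPq, hqq, trace_add, trace_sub,
        trace_smul, smul_eq_mul, htr]
      ring
    rw [show IMat q r (IMat q r a) =
        r • ((IMat q r a)ᴴ * q - q * (IMat q r a)ᴴ) +
          (⅟(2:R) * (r ^ 3 * ((IMat q r a)ᴴ * q).trace)) • (q * qᴴ - qᴴ * q) from rfl,
      htrb, hbH, hsigma]
    simp only [add_mul, mul_add, sub_mul, mul_sub, smul_mul_assoc, mul_smul_comm, smul_sub,
      smul_add, smul_smul, ← mul_assoc, hq, hqq]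
    linear_combination (norm := module)
      (-(r^2)) • H5 + (-(r^2)) • H6 + (r^4) • H7 + (r^4) • H8
      + (2*⅟(2:R)*r^4*((a * qᴴ * q).trace + (qᴴ * a * q).trace)) • hqPq
      + (-1 : R) • ha
      + hr • ((r^2*((a * qᴴ * q).trace + (qᴴ * a * q).trace)) • q
          - (r^2) • (qᴴ * a * q) - (r^2) • (q * a * qᴴ) - (a * q + q * a))
      + mul_invOf_self (2:R) •
          ((r^4*(qᴴ * q).trace*((a * qᴴ * q).trace + (qᴴ * a * q).trace)) • q
            - (r^4*(qᴴ * a * q).trace) • (qᴴ * q) - (r^4*(a * qᴴ * q).trace) • (q * qᴴ))
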